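/- In a prediction space in which all cumulative distribution functions in the class 𝓕 (containing F almost surely) are continuous and strictly increasing on a shared support interval, in which there is a countable set 𝓖 ⊆ 𝓕 with Q(F ∈ 𝓖) = 1, and in which Assumption (T) holds for all quantile and threshold non-exceedance functionals, CEP calibration, quantile calibration, and threshold calibration of the predictive distribution F are all equivalent, and each implies both probabilistic and marginal calibration of F. -/

import Mathlib

open MeasureTheory ProbabilityTheory

noncomputable section

/-- The cumulative distribution function of a measure `G` on `ℝ`, evaluated at `y`. -/
def cdfAt (G : Measure ℝ) (y : ℝ) : ℝ := (G (Set.Iic y)).toReal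

/-- The left limit `G(y−)` of the CDF of `G` at `y`. -/
def cdfLt (G : Measure ℝ) (y : ℝ) : ℝ := (G (Set.Iio y)).toReal

/-- The lower `α`-quantile `q_α^-(G) = inf {x : G(x) ≥ α}`. -/
def lowerQuantile (G : Measure ℝ) (α : ℝ) : ℝ := sInf {x : ℝ | α ≤ cdfAt G x}

/-- The upper `α`-quantile `q_α^+(G) = sup {x : G(x−) ≤ α}`. -/
def upperQuantile (G : Measure ℝ) (α : ℝ) : ℝ := sSup {x : ℝ | cdfLt G x ≤ α}

variable {Ω : Type*} [MeasurableSpace Ω]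

/-- The (randomized) probability integral transform `Z_F = F(Y−) + U (F(Y) − F(Y−))`. -/
def PIT (F : Ω → Measure ℝ) (Y U : Ω → ℝ) (ω : Ω) : ℝ :=
  cdfLt (F ω) (Y ω) + U ω * (cdfAt (F ω) (Y ω) - cdfLt (F ω) (Y ω))

/-- The uniform distribution on `[0,1]`. -/
def unif01 : Measure ℝ := volume.restrict (Set.Icc (0:ℝ) 1)

/-- A prediction space: a probability space carrying a random probability measure `F` on `ℝ`
(the predictive distribution), an outcome `Y`, and a uniform random variable `U` that is
independent of the σ-algebra generated by `F` and `Y`. -/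
structure IsPredictionSpace (μ : Measure Ω) (F : Ω → Measure ℝ) (Y U : Ω → ℝ) : Prop where
  isProb : IsProbabilityMeasure μ
  probF : ∀ ω, IsProbabilityMeasure (F ω)
  measF : Measurable F
  measY : Measurable Y
  measU : Measurable U
  unifU : μ.map U = unif01
  indepU : Indep (MeasurableSpace.comap U inferInstance)
    (MeasurableSpace.comap F inferInstance ⊔ MeasurableSpace.comap Y inferInstance) μ

/-- `F` is auto-calibrated: `F(y) = Q(Y ≤ y | σ(F))` a.s. for every `y`. -/
def AutoCalibrated (μ : Measure Ω) (F : Ω → Measure ℝ) (Y : Ω → ℝ) : Prop :=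
  ∀ y : ℝ, (fun ω => cdfAt (F ω) y)
    =ᵐ[μ] μ[Set.indicator {ω | Y ω ≤ y} (fun _ => (1:ℝ)) | MeasurableSpace.comap F inferInstance]

/-- `F` is probabilistically calibrated: the PIT is uniform on `[0,1]`. -/
def ProbCalibrated (μ : Measure Ω) (F : Ω → Measure ℝ) (Y U : Ω → ℝ) : Prop :=
  μ.map (PIT F Y U) = unif01

/-- `F` is marginally calibrated: `E[F(y)] = Q(Y ≤ y)` for every `y`. -/
def MargCalibrated (μ : Measure Ω) (F : Ω → Measure ℝ) (Y : Ω → ℝ) : Prop :=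
  ∀ y : ℝ, ∫ ω, cdfAt (F ω) y ∂μ = (μ {ω | Y ω ≤ y}).toReal

/-- `F` is CEP calibrated: `Q(Z_F ≤ α | q_α^-(F)) = α` a.s. for every `α ∈ (0,1)`. -/
def CEPCalibrated (μ : Measure Ω) (F : Ω → Measure ℝ) (Y U : Ω → ℝ) : Prop :=
  ∀ α ∈ Set.Ioo (0:ℝ) 1,
    μ[Set.indicator {ω | PIT F Y U ω ≤ α} (fun _ => (1:ℝ)) |
      MeasurableSpace.comap (fun ω => lowerQuantile (F ω) α) inferInstance]
      =ᵐ[μ] fun _ => α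

/-- `F` is threshold calibrated: `Q(Y ≤ t | F(t)) = F(t)` a.s. for every `t`. -/
def ThreshCalibrated (μ : Measure Ω) (F : Ω → Measure ℝ) (Y : Ω → ℝ) : Prop :=
  ∀ t : ℝ,
    μ[Set.indicator {ω | Y ω ≤ t} (fun _ => (1:ℝ)) |
      MeasurableSpace.comap (fun ω => cdfAt (F ω) t) inferInstance]
      =ᵐ[μ] fun ω => cdfAt (F ω) t

/-- An identification function: measurable, increasing and left-continuous in its
first argument. -/
structure IsIdentificationFunction (V : ℝ → ℝ → ℝ) : Prop where
  meas : Measurable (Function.uncurry V)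
  mono : ∀ y : ℝ, Monotone fun x => V x y
  leftCont : ∀ y x : ℝ, ContinuousWithinAt (fun x => V x y) (Set.Iic x) x

/-- Lower bound `T^-(G) = sup {x : ∫ V(x,y) dG(y) < 0}` of the functional induced by `V`. -/
def Tminus (V : ℝ → ℝ → ℝ) (G : Measure ℝ) : ℝ := sSup {x : ℝ | ∫ y, V x y ∂G < 0}

/-- Upper bound `T^+(G) = inf {x : ∫ V(x,y) dG(y) > 0}` of the functional induced by `V`. -/
def Tplus (V : ℝ → ℝ → ℝ) (G : Measure ℝ) : ℝ := sInf {x : ℝ | 0 < ∫ y, V x y ∂G}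

/-- `V` is of prediction error form `V(x,y) = v(x−y)`. -/
def PredErrorForm (V : ℝ → ℝ → ℝ) : Prop :=
  ∃ v : ℝ → ℝ, Monotone v ∧ (∀ x : ℝ, ContinuousWithinAt v (Set.Iic x) x) ∧
    (∃ r : ℝ, 0 < r ∧ v (-r) < 0 ∧ 0 < v r) ∧ ∀ x y : ℝ, V x y = v (x - y)

/-- `V` is of the form `V(x,y) = x − T(δ_y)` for a singleton-valued functional `T`. -/
def DiracSingletonForm (V : ℝ → ℝ → ℝ) : Prop :=
  (∀ y : ℝ, Tminus V (Measure.dirac y) = Tplus V (Measure.dirac y)) ∧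
  ∀ x y : ℝ, V x y = x - Tminus V (Measure.dirac y)

/-- Assumption (V): `V` induces the functional on a convex class `𝓕₀ ⊇ 𝓕` of probability
measures containing all Dirac measures, and `V` is of prediction error form or of the
form `V(x,y) = x − T(δ_y)` for a singleton-valued `T`. -/
structure AssumptionV (V : ℝ → ℝ → ℝ) (𝓕 : Set (Measure ℝ)) : Prop where
  inducing : ∃ 𝓕₀ : Set (Measure ℝ), 𝓕 ⊆ 𝓕₀ ∧ (∀ G ∈ 𝓕₀, IsProbabilityMeasure G) ∧
    (∀ y : ℝ, Measure.dirac y ∈ 𝓕₀) ∧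
    (∀ G₁ ∈ 𝓕₀, ∀ G₂ ∈ 𝓕₀, ∀ p : ℝ, 0 ≤ p → p ≤ 1 →
      ENNReal.ofReal p • G₁ + ENNReal.ofReal (1 - p) • G₂ ∈ 𝓕₀) ∧
    ∀ G ∈ 𝓕₀, ∀ x : ℝ, Integrable (fun y => V x y) G
  form : PredErrorForm V ∨ DiracSingletonForm V

/-- The pair `(T^-(F), T^+(F))` of the interval-valued functional applied to the
random predictive distribution. -/
def TpairOf (V : ℝ → ℝ → ℝ) (F : Ω → Measure ℝ) (ω : Ω) : ℝ × ℝ :=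
  (Tminus V (F ω), Tplus V (F ω))

/-- Conditional `T`-calibration of the predictive distribution `F`:
`T(L(Y | T(F))) = T(F)` almost surely. -/
def CondTCalibrated (μ : Measure Ω) [IsFiniteMeasure μ] (V : ℝ → ℝ → ℝ)
    (F : Ω → Measure ℝ) (Y : Ω → ℝ) : Prop :=
  ∀ᵐ ω ∂μ,
    Tminus V (condDistrib Y (TpairOf V F) μ (TpairOf V F ω)) = Tminus V (F ω) ∧
    Tplus V (condDistrib Y (TpairOf V F) μ (TpairOf V F ω)) = Tplus V (F ω)

/-- Unconditional `T`-calibration of the predictive distribution `F`. -/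
def UncondTCalibrated (μ : Measure Ω) (V : ℝ → ℝ → ℝ)
    (F : Ω → Measure ℝ) (Y : Ω → ℝ) : Prop :=
  ∀ ε : ℝ, 0 < ε →
    (∫ ω, V (Tplus V (F ω) - ε) (Y ω) ∂μ) ≤ 0 ∧
    0 ≤ ∫ ω, V (Tminus V (F ω) + ε) (Y ω) ∂μ

/-- Unconditional `T`-calibration of a single-valued point forecast `X`. -/
def UncondCalibratedPt (μ : Measure Ω) (V : ℝ → ℝ → ℝ) (X Y : Ω → ℝ) : Prop :=
  ∀ ε : ℝ, 0 < ε →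
    (∫ ω, V (X ω - ε) (Y ω) ∂μ) ≤ 0 ∧ 0 ≤ ∫ ω, V (X ω + ε) (Y ω) ∂μ

/-- The sets defining `T^-(G)` and `T^+(G)` are nonempty and bounded, so that the induced
functional is well defined and finite at `G`. -/
def TWellDefined (V : ℝ → ℝ → ℝ) (G : Measure ℝ) : Prop :=
  {x : ℝ | ∫ y, V x y ∂G < 0}.Nonempty ∧ BddAbove {x : ℝ | ∫ y, V x y ∂G < 0} ∧
  {x : ℝ | 0 < ∫ y, V x y ∂G}.Nonempty ∧ BddBelow {x : ℝ | 0 < ∫ y, V x y ∂G}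

/-- The elementary loss `S_η(x,y) = (1{η ≤ x} − 1{η ≤ y}) V(η,y)`. -/
def elemLoss (V : ℝ → ℝ → ℝ) (η x y : ℝ) : ℝ :=
  ((if η ≤ x then (1:ℝ) else 0) - if η ≤ y then (1:ℝ) else 0) * V η y

/-- `S` has mixture (Choquet) form with respect to the identification function `V`. -/
def MixtureForm (V S : ℝ → ℝ → ℝ) : Prop :=
  ∃ H : Measure ℝ, IsLocallyFiniteMeasure H ∧
    ∀ x y : ℝ, S x y = ∫ η, elemLoss V η x y ∂H

/-- `S` is a canonical loss for the functional induced by `V`. -/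
def IsCanonicalLoss (V S : ℝ → ℝ → ℝ) : Prop :=
  (∀ x y : ℝ, 0 ≤ S x y) ∧
  ∃ a : ℝ, 0 < a ∧ ∃ b : ℝ → ℝ, Measurable b ∧
    ∀ x y : ℝ, S x y = a * (∫ η, elemLoss V η x y) + b y

/-- `S` is a consistent scoring function for the functional induced by `V` on the class `𝓕`. -/
def ConsistentFor (S V : ℝ → ℝ → ℝ) (𝓕 : Set (Measure ℝ)) : Prop :=
  ∀ G ∈ 𝓕, ∀ t ∈ Set.Icc (Tminus V G) (Tplus V G), ∀ x : ℝ,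
    ∫ y, S t y ∂G ≤ ∫ y, S x y ∂G

/-- `S` is a strictly consistent scoring function for the functional induced by `V` on `𝓕`. -/
def StrictlyConsistentFor (S V : ℝ → ℝ → ℝ) (𝓕 : Set (Measure ℝ)) : Prop :=
  ConsistentFor S V 𝓕 ∧
  ∀ G ∈ 𝓕, ∀ t ∈ Set.Icc (Tminus V G) (Tplus V G), ∀ x : ℝ,
    x ∉ Set.Icc (Tminus V G) (Tplus V G) → ∫ y, S t y ∂G < ∫ y, S x y ∂G

/-- The empirical distribution of the outcomes `y i`, `i ∈ s`. -/
def empOn {n : ℕ} (y : Fin n → ℝ) (s : Finset (Fin n)) : Measure ℝ :=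
  (s.card : ENNReal)⁻¹ • ∑ i ∈ s, Measure.dirac (y i)

/-- A locally bounded real function of a real variable. -/
def LocallyBdd (f : ℝ → ℝ) : Prop :=
  ∀ η₀ : ℝ, ∃ ε : ℝ, 0 < ε ∧ ∃ C : ℝ, ∀ η : ℝ, |η - η₀| < ε → |f η| ≤ C

/-- All CDFs in the class `𝓕` are continuous and strictly increasing on a shared
support interval. -/
def CSI (𝓕 : Set (Measure ℝ)) : Prop :=
  ∃ S : Set ℝ, S.Nonempty ∧ S.OrdConnected ∧ ∀ G ∈ 𝓕,
    Continuous (cdfAt G) ∧ StrictMonoOn (cdfAt G) S ∧ G Sᶜ = 0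

/-- The conditioning variable for quantile calibration at level `α`: the interval of
`α`-quantiles, represented by its endpoints. -/
def qPairOf (F : Ω → Measure ℝ) (α : ℝ) (ω : Ω) : ℝ × ℝ :=
  (lowerQuantile (F ω) α, upperQuantile (F ω) α)

/-- `F` is quantile calibrated: for every `α ∈ (0,1)`,
`q_α(L(Y | q_α(F))) = q_α(F)` almost surely. -/
def QuantileCalibrated (μ : Measure Ω) [IsFiniteMeasure μ]
    (F : Ω → Measure ℝ) (Y : Ω → ℝ) : Prop :=
  ∀ α ∈ Set.Ioo (0:ℝ) 1, ∀ᵐ ω ∂μ,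
    lowerQuantile (condDistrib Y (qPairOf F α) μ (qPairOf F α ω)) α
      = lowerQuantile (F ω) α ∧
    upperQuantile (condDistrib Y (qPairOf F α) μ (qPairOf F α ω)) α
      = upperQuantile (F ω) α


/-!
When every CDF in the class is continuous and strictly increasing on a common support interval,
the PIT is `F(Y)`, the `α`-quantile is unique, and for `α ∈ (0,1)` the events `{F(Y) ≤ α}` and
`{Y ≤ q_α(F)}`, as well as `{F(t) = α}` and `{q_α(F) = t}`, agree almost surely. Since `F` takes
only countably many values, conditioning on a functional of `F` amounts to averaging over its
atoms, and all three calibration notions reduce to the same atomwise condition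
`Q(Y ≤ q, q_α(F) = q) = α Q(q_α(F) = q)`. Integrating it gives `Q(F(Y) ≤ α) = α`, i.e.
probabilistic calibration, which in turn settles the threshold atoms at levels `F(t) ∈ {0, 1}`.
Marginal calibration follows from threshold calibration by the tower property.
-/

open Set Filter Topology

structure IsRegularCDF (G : Measure ℝ) : Prop where
  continuous : Continuous (cdfAt G)
  lt_of_lt : ∀ ⦃a b : ℝ⦄, a < b → 0 < cdfAt G a → cdfAt G b < 1 → cdfAt G a < cdfAt G b

lemma cdfAt_eq_cdf (G : Measure ℝ) [IsProbabilityMeasure G] : cdfAt G = cdf G := by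
  ext x
  rw [cdf_eq_real]
  rfl

lemma monotone_cdfAt (G : Measure ℝ) [IsProbabilityMeasure G] : Monotone (cdfAt G) :=
  cdfAt_eq_cdf G ▸ monotone_cdf G

lemma cdfAt_nonneg (G : Measure ℝ) (x : ℝ) : 0 ≤ cdfAt G x := ENNReal.toReal_nonneg

lemma cdfAt_le_one (G : Measure ℝ) [IsProbabilityMeasure G] (x : ℝ) : cdfAt G x ≤ 1 :=
  cdfAt_eq_cdf G ▸ cdf_le_one G x

section RegularCDF

variable {G : Measure ℝ} [IsProbabilityMeasure G] {α : ℝ}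

lemma bddBelow_setOf_le_cdfAt (hα : 0 < α) : BddBelow {x | α ≤ cdfAt G x} := by
  obtain ⟨M, hM⟩ :=
    ((cdfAt_eq_cdf G ▸ tendsto_cdf_atBot G).eventually (eventually_lt_nhds hα)).exists
  exact ⟨M, fun x hx => le_of_not_gt fun hxM => ((monotone_cdfAt G hxM.le).trans_lt hM).not_ge hx⟩

lemma le_cdfAt_lowerQuantile (hα : α ∈ Ioo 0 1) : α ≤ cdfAt G (lowerQuantile G α) := by
  have hne : {x | α ≤ cdfAt G x}.Nonempty :=
    ((cdfAt_eq_cdf G ▸ tendsto_cdf_atTop G).eventually (eventually_ge_nhds hα.2)).exists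
  have hright : Tendsto (cdfAt G) (𝓝[>] lowerQuantile G α) (𝓝 (cdfAt G (lowerQuantile G α))) :=
    cdfAt_eq_cdf G ▸ ((cdf G).right_continuous _).mono Ioi_subset_Ici_self
  refine ge_of_tendsto hright ?_
  filter_upwards [self_mem_nhdsWithin] with x hx
  obtain ⟨y, hy, hyx⟩ := exists_lt_of_csInf_lt hne hx
  exact hy.trans (monotone_cdfAt G hyx.le)

lemma isRegularCDF_of_strictMonoOn {S : Set ℝ} (hS : S.OrdConnected) (hcont : Continuous (cdfAt G))
    (hmono : StrictMonoOn (cdfAt G) S) (hSc : G Sᶜ = 0) : IsRegularCDF G := by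
  refine ⟨hcont, fun a b hab ha hb => ?_⟩
  obtain ⟨s, hsS, hsa⟩ : ∃ s ∈ S, s ≤ a := by
    by_contra! h
    have : G (Iic a) = 0 := measure_mono_null (fun x hx hxS => (h x hxS).not_ge hx) hSc
    simp [cdfAt, this] at ha
  obtain ⟨s', hs'S, hbs'⟩ : ∃ s' ∈ S, b < s' := by
    by_contra! h
    have : G (Iic b)ᶜ = 0 := measure_mono_null (fun x hx hxS => hx (h x hxS)) hSc
    rw [prob_compl_eq_zero_iff measurableSet_Iic] at this
    simp [cdfAt, this] at hb
  exact hmono (hS.out hsS hs'S ⟨hsa, by linarith⟩) (hS.out hsS hs'S ⟨by linarith, hbs'.le⟩) hab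

lemma CSI.isRegularCDF {𝓕 : Set (Measure ℝ)} (h : CSI 𝓕) (hG : G ∈ 𝓕) : IsRegularCDF G := by
  obtain ⟨S, -, hS, hreg⟩ := h
  obtain ⟨hcont, hmono, hSc⟩ := hreg G hG
  exact isRegularCDF_of_strictMonoOn hS hcont hmono hSc

namespace IsRegularCDF

lemma cdfLt_eq (hG : IsRegularCDF G) : cdfLt G = cdfAt G := by
  ext y
  have hleft : Function.leftLim (cdf G) y = cdf G y :=
    leftLim_eq_of_tendsto ((cdfAt_eq_cdf G ▸ hG.continuous).continuousAt.tendsto.mono_left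
      nhdsWithin_le_nhds)
  have hy : G {y} = 0 := by rw [← measure_cdf G, StieltjesFunction.measure_singleton, hleft]; simp
  rw [cdfLt, cdfAt, measure_congr (Iio_ae_eq_Iic' hy)]

lemma cdfAt_lowerQuantile (hG : IsRegularCDF G) (hα : α ∈ Ioo 0 1) :
    cdfAt G (lowerQuantile G α) = α := by
  refine le_antisymm (le_of_not_gt fun h => ?_) (le_cdfAt_lowerQuantile hα)
  have hleft : Tendsto (cdfAt G) (𝓝[<] lowerQuantile G α) (𝓝 (cdfAt G (lowerQuantile G α))) :=
    (hG.continuous.tendsto _).mono_left nhdsWithin_le_nhds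
  obtain ⟨x, hαx, hxq⟩ := ((hleft.eventually (eventually_gt_nhds h)).and self_mem_nhdsWithin).exists
  exact (csInf_le (bddBelow_setOf_le_cdfAt hα.1) hαx.le).not_gt hxq

lemma cdfAt_le_iff (hG : IsRegularCDF G) (hα : α ∈ Ioo 0 1) (y : ℝ) :
    cdfAt G y ≤ α ↔ y ≤ lowerQuantile G α := by
  have hq := hG.cdfAt_lowerQuantile hα
  refine ⟨fun hy => le_of_not_gt fun hqy => ?_, fun hy => hq ▸ monotone_cdfAt G hy⟩
  have := hG.lt_of_lt hqy (hq.symm ▸ hα.1) (hy.trans_lt hα.2)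
  linarith

lemma lowerQuantile_eq_iff (hG : IsRegularCDF G) (hα : α ∈ Ioo 0 1) (t : ℝ) :
    lowerQuantile G α = t ↔ cdfAt G t = α := by
  refine ⟨fun h => h ▸ hG.cdfAt_lowerQuantile hα, fun ht => le_antisymm ?_ ?_⟩
  · exact csInf_le (bddBelow_setOf_le_cdfAt hα.1) ht.ge
  · exact (hG.cdfAt_le_iff hα t).1 ht.le

lemma upperQuantile_eq (hG : IsRegularCDF G) (hα : α ∈ Ioo 0 1) :
    upperQuantile G α = lowerQuantile G α := by
  have : {x | cdfLt G x ≤ α} = Iic (lowerQuantile G α) := by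
    ext y
    rw [mem_ofPred_eq, hG.cdfLt_eq, hG.cdfAt_le_iff hα, mem_Iic]
  rw [upperQuantile, this, csSup_Iic]

end IsRegularCDF

end RegularCDF

section CountableFibers

variable {μ : Measure Ω} {β : Type*} [MeasurableSpace β] [MeasurableSingletonClass β] {X : Ω → β}
  {V : Set β}

lemma setIntegral_preimage_eq_tsum (hX : Measurable X) (hV : V.Countable)
    (hXV : ∀ᵐ ω ∂μ, X ω ∈ V) {φ : Ω → ℝ} (hφ : Integrable φ μ) (B : Set β) :
    ∫ ω in X ⁻¹' B, φ ω ∂μ = ∑' v : ↥(B ∩ V), ∫ ω in X ⁻¹' {(v : β)}, φ ω ∂μ := by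
  have : Countable ↥(B ∩ V) := (hV.mono inter_subset_right).to_subtype
  have hae : X ⁻¹' B =ᵐ[μ] ⋃ v : ↥(B ∩ V), X ⁻¹' {(v : β)} := by
    rw [← preimage_iUnion, iUnion_singleton_eq_range, Subtype.range_coe, eventuallyEq_set]
    filter_upwards [hXV] with ω hω
    simp [hω]
  rw [setIntegral_congr_set hae, integral_iUnion (fun v => hX (measurableSet_singleton _)) _
    hφ.integrableOn]
  intro v w hvw
  exact (disjoint_singleton.2 (Subtype.coe_injective.ne hvw)).preimage X

lemma condExp_comap_ae_eq_comp_iff [IsFiniteMeasure μ] (hX : Measurable X) (hV : V.Countable)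
    (hXV : ∀ᵐ ω ∂μ, X ω ∈ V) {f : Ω → ℝ} (hf : Integrable f μ) {g : β → ℝ} (hg : Measurable g)
    (hgX : Integrable (g ∘ X) μ) :
    μ[f | MeasurableSpace.comap X inferInstance] =ᵐ[μ] g ∘ X ↔
      ∀ v, ∫ ω in X ⁻¹' {v}, f ω ∂μ = ∫ ω in X ⁻¹' {v}, g (X ω) ∂μ := by
  have hm := hX.comap_le
  refine ⟨fun h v => ?_, fun h => ?_⟩
  · rw [← setIntegral_condExp hm hf ⟨{v}, measurableSet_singleton v, rfl⟩]
    exact setIntegral_congr_ae (hX (measurableSet_singleton v)) (h.mono fun ω hω _ => hω)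
  · refine (ae_eq_condExp_of_forall_setIntegral_eq hm hf (fun _ _ _ => hgX.integrableOn) ?_
      (hg.comp (Measurable.of_comap_le le_rfl)).aestronglyMeasurable).symm
    rintro _ ⟨B, -, rfl⟩ -
    rw [setIntegral_preimage_eq_tsum hX hV hXV hgX, setIntegral_preimage_eq_tsum hX hV hXV hf]
    exact tsum_congr fun v => (h v).symm

end CountableFibers

section Uniform

variable {μ : Measure Ω} {Z : Ω → ℝ}

lemma unif01_Iic (a : ℝ) : unif01 (Iic a) = ENNReal.ofReal (min 1 a) := by
  rw [unif01, Measure.restrict_apply measurableSet_Iic, inter_comm, ← Ici_inter_Iic, inter_assoc,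
    Iic_inter_Iic, Ici_inter_Iic, Real.volume_Icc, sub_zero]

lemma map_eq_unif01 [IsProbabilityMeasure μ] (hZ : AEMeasurable Z μ)
    (h : ∀ α ∈ Ioo (0:ℝ) 1, μ {ω | Z ω ≤ α} = ENNReal.ofReal α) : μ.map Z = unif01 := by
  have : IsFiniteMeasure unif01 := by
    rw [unif01]; exact isFiniteMeasure_restrict.2 measure_Icc_lt_top.ne
  refine Measure.ext_of_Iic _ _ fun a => ?_
  rw [Measure.map_apply_of_aemeasurable hZ measurableSet_Iic, unif01_Iic]
  have hmono : ∀ {a b : ℝ}, a ≤ b → μ (Z ⁻¹' Iic a) ≤ μ (Z ⁻¹' Iic b) :=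
    fun hab => measure_mono fun ω hω => le_trans hω hab
  rcases lt_or_ge a 1 with ha1 | ha1
  · rcases lt_or_ge 0 a with ha0 | ha0
    · rw [min_eq_right ha1.le]; exact h a ⟨ha0, ha1⟩
    · rw [ENNReal.ofReal_of_nonpos (min_le_of_right_le ha0)]
      refine le_antisymm (ge_of_tendsto ((ENNReal.continuous_ofReal.tendsto' 0 0
        ENNReal.ofReal_zero).mono_left (nhdsWithin_le_nhds (s := Ioi 0))) ?_) zero_le
      filter_upwards [Ioo_mem_nhdsGT zero_lt_one] with α hα
      exact (h α hα) ▸ hmono (ha0.trans hα.1.le)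
  · rw [min_eq_left ha1, ENNReal.ofReal_one]
    refine le_antisymm prob_le_one (le_of_tendsto ((ENNReal.continuous_ofReal.tendsto' 1 1
      ENNReal.ofReal_one).mono_left (nhdsWithin_le_nhds (s := Iio 1))) ?_)
    filter_upwards [Ioo_mem_nhdsLT zero_lt_one] with α hα
    exact (h α hα) ▸ hmono (hα.2.le.trans ha1)

lemma ae_ne_of_map_eq_unif01 (hZ : AEMeasurable Z μ) (h : μ.map Z = unif01) (c : ℝ) :
    ∀ᵐ ω ∂μ, Z ω ≠ c := by
  have : μ (Z ⁻¹' {c}) = 0 := by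
    rw [← Measure.map_apply_of_aemeasurable hZ (measurableSet_singleton c), h, unif01,
      Measure.restrict_apply (measurableSet_singleton c)]
    exact measure_mono_null inter_subset_left Real.volume_singleton
  exact measure_eq_zero_iff_ae_notMem.1 this

end Uniform

section PredictionSpace

variable {μ : Measure Ω} {F : Ω → Measure ℝ} {Y U : Ω → ℝ}

def belowQuantile (F : Ω → Measure ℝ) (Y : Ω → ℝ) (α : ℝ) : Ω → ℝ :=
  {ω | Y ω ≤ lowerQuantile (F ω) α}.indicator fun _ => 1

def QuantileAtomCalibrated (μ : Measure Ω) (F : Ω → Measure ℝ) (Y : Ω → ℝ) : Prop :=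
  ∀ α ∈ Ioo (0:ℝ) 1, ∀ q : ℝ,
    ∫ ω in (fun ω => lowerQuantile (F ω) α) ⁻¹' {q}, belowQuantile F Y α ω ∂μ =
      ∫ _ in (fun ω => lowerQuantile (F ω) α) ⁻¹' {q}, α ∂μ

lemma measurable_cdfAt_comp (hF : Measurable F) (hprob : ∀ ω, IsProbabilityMeasure (F ω))
    (hY : Measurable Y) : Measurable fun ω => cdfAt (F ω) (Y ω) := by
  let κ : Kernel Ω ℝ := ⟨F, hF⟩
  have : IsMarkovKernel κ := ⟨hprob⟩
  exact (κ.measurable_kernel_prodMk_left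
    (measurableSet_le measurable_snd (hY.comp measurable_fst))).ennreal_toReal

lemma PIT_ae_eq (hprob : ∀ ω, IsProbabilityMeasure (F ω))
    (hreg : ∀ᵐ ω ∂μ, IsRegularCDF (F ω)) : PIT F Y U =ᵐ[μ] fun ω => cdfAt (F ω) (Y ω) := by
  filter_upwards [hreg] with ω hω
  simp [PIT, hω.cdfLt_eq]

lemma aemeasurable_PIT (hF : Measurable F) (hprob : ∀ ω, IsProbabilityMeasure (F ω))
    (hreg : ∀ᵐ ω ∂μ, IsRegularCDF (F ω)) (hY : Measurable Y) : AEMeasurable (PIT F Y U) μ :=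
  (measurable_cdfAt_comp hF hprob hY).aemeasurable.congr (PIT_ae_eq hprob hreg).symm

lemma PIT_le_ae_iff (hprob : ∀ ω, IsProbabilityMeasure (F ω))
    (hreg : ∀ᵐ ω ∂μ, IsRegularCDF (F ω)) {α : ℝ} (hα : α ∈ Ioo 0 1) :
    ∀ᵐ ω ∂μ, PIT F Y U ω ≤ α ↔ Y ω ≤ lowerQuantile (F ω) α := by
  filter_upwards [hreg, PIT_ae_eq (U := U) hprob hreg] with ω hω hPIT
  rw [hPIT]
  exact hω.cdfAt_le_iff hα (Y ω)

lemma indicator_PIT_le_ae_eq (hprob : ∀ ω, IsProbabilityMeasure (F ω))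
    (hreg : ∀ᵐ ω ∂μ, IsRegularCDF (F ω)) {α : ℝ} (hα : α ∈ Ioo 0 1) :
    {ω | PIT F Y U ω ≤ α}.indicator (fun _ => (1:ℝ)) =ᵐ[μ] belowQuantile F Y α := by
  filter_upwards [PIT_le_ae_iff (Y := Y) (U := U) hprob hreg hα] with ω hω
  simp only [belowQuantile, indicator, mem_ofPred_eq, hω]

lemma setIntegral_cdfAt_fiber_iff (hprob : ∀ ω, IsProbabilityMeasure (F ω))
    (hreg : ∀ᵐ ω ∂μ, IsRegularCDF (F ω)) {α t : ℝ} (hα : α ∈ Ioo 0 1)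
    (hq : Measurable fun ω => lowerQuantile (F ω) α) (ht : Measurable fun ω => cdfAt (F ω) t) :
    (∫ ω in (fun ω => cdfAt (F ω) t) ⁻¹' {α}, {ω | Y ω ≤ t}.indicator (fun _ => (1:ℝ)) ω ∂μ =
        ∫ ω in (fun ω => cdfAt (F ω) t) ⁻¹' {α}, cdfAt (F ω) t ∂μ) ↔
      ∫ ω in (fun ω => lowerQuantile (F ω) α) ⁻¹' {t}, belowQuantile F Y α ω ∂μ =
        ∫ _ in (fun ω => lowerQuantile (F ω) α) ⁻¹' {t}, α ∂μ := by
  have hfiber : (fun ω => cdfAt (F ω) t) ⁻¹' {α} =ᵐ[μ] (fun ω => lowerQuantile (F ω) α) ⁻¹' {t} :=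
    eventuallyEq_set.2 (hreg.mono fun ω h => (h.lowerQuantile_eq_iff hα t).symm)
  have hlhs : ∫ ω in (fun ω => cdfAt (F ω) t) ⁻¹' {α},
      {ω | Y ω ≤ t}.indicator (fun _ => (1:ℝ)) ω ∂μ =
        ∫ ω in (fun ω => lowerQuantile (F ω) α) ⁻¹' {t}, belowQuantile F Y α ω ∂μ := by
    rw [setIntegral_congr_set hfiber]
    refine setIntegral_congr_fun (hq (measurableSet_singleton t)) fun ω (hω : _ = t) => ?_
    simp only [belowQuantile, indicator, mem_ofPred_eq, hω]
  have hrhs : ∫ ω in (fun ω => cdfAt (F ω) t) ⁻¹' {α}, cdfAt (F ω) t ∂μ =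
      ∫ _ in (fun ω => lowerQuantile (F ω) α) ⁻¹' {t}, α ∂μ := by
    rw [setIntegral_congr_fun (ht (measurableSet_singleton α)) fun ω (hω : _ = α) => hω,
      setIntegral_congr_set hfiber]
  rw [hlhs, hrhs]

/-- A uniform PIT charges neither `0` nor `1`, which rules out `Y ≤ t` where `F(t) = 0` and
`Y > t` where `F(t) = 1`. -/
lemma ProbCalibrated.indicator_le_ae_eq_cdfAt (hpc : ProbCalibrated μ F Y U) (hF : Measurable F)
    (hprob : ∀ ω, IsProbabilityMeasure (F ω)) (hreg : ∀ᵐ ω ∂μ, IsRegularCDF (F ω))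
    (hY : Measurable Y) (t : ℝ) :
    ∀ᵐ ω ∂μ, cdfAt (F ω) t ∉ Ioo 0 1 →
      {ω | Y ω ≤ t}.indicator (fun _ => (1:ℝ)) ω = cdfAt (F ω) t := by
  have hPIT := aemeasurable_PIT (U := U) hF hprob hreg hY
  filter_upwards [PIT_ae_eq (U := U) hprob hreg, ae_ne_of_map_eq_unif01 hPIT hpc 0,
    ae_ne_of_map_eq_unif01 hPIT hpc 1] with ω hZ h0 h1 hnot
  rw [hZ] at h0 h1
  have hv : cdfAt (F ω) t = 0 ∨ cdfAt (F ω) t = 1 := by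
    by_contra! h
    exact hnot ⟨(cdfAt_nonneg _ _).lt_of_ne h.1.symm, (cdfAt_le_one _ _).lt_of_ne h.2⟩
  by_cases hYt : Y ω ≤ t
  · have hle := monotone_cdfAt (F ω) hYt
    rcases hv with hv | hv
    · exact absurd (le_antisymm (hle.trans hv.le) (cdfAt_nonneg _ _)) h0
    · simp [hYt, hv]
  · have hle := monotone_cdfAt (F ω) (not_le.1 hYt).le
    rcases hv with hv | hv
    · simp [hYt, hv]
    · exact absurd (le_antisymm (cdfAt_le_one _ _) (hv ▸ hle)) h1

lemma condExp_indicator_le_comp_ae_eq [IsFiniteMeasure μ] {β : Type*} [MeasurableSpace β]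
    {X : Ω → β} (hX : Measurable X) (hY : Measurable Y) {h : β → ℝ} (hh : Measurable h) :
    μ[{ω | Y ω ≤ h (X ω)}.indicator (fun _ => (1:ℝ)) | MeasurableSpace.comap X inferInstance]
      =ᵐ[μ] fun ω => cdfAt (condDistrib Y X μ (X ω)) (h (X ω)) := by
  let ψ : β × ℝ → ℝ := {p | p.2 ≤ h p.1}.indicator fun _ => 1
  have hψ : StronglyMeasurable ψ := (measurable_const.indicator
    (measurableSet_le measurable_snd (hh.comp measurable_fst))).stronglyMeasurable
  refine (condExp_prod_ae_eq_integral_condDistrib hX hY.aemeasurable hψ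
    ((integrable_const 1).indicator (measurableSet_le hY (hh.comp hX)))).trans
    (Eventually.of_forall fun ω => ?_)
  change ∫ y, (Iic (h (X ω))).indicator (fun _ => (1:ℝ)) y ∂_ = _
  rw [integral_indicator_const _ measurableSet_Iic, smul_eq_mul, mul_one]
  rfl

variable [IsProbabilityMeasure μ] {𝓖 : Set (Measure ℝ)}

lemma integrable_belowQuantile (hY : Measurable Y) {α : ℝ}
    (hq : Measurable fun ω => lowerQuantile (F ω) α) : Integrable (belowQuantile F Y α) μ :=
  (integrable_const 1).indicator (measurableSet_le hY hq)

lemma cepCalibrated_iff (hprob : ∀ ω, IsProbabilityMeasure (F ω))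
    (hreg : ∀ᵐ ω ∂μ, IsRegularCDF (F ω)) (hY : Measurable Y)
    (hq : ∀ α ∈ Ioo (0:ℝ) 1, Measurable fun ω => lowerQuantile (F ω) α)
    (h𝓖 : 𝓖.Countable) (hF𝓖 : ∀ᵐ ω ∂μ, F ω ∈ 𝓖) :
    CEPCalibrated μ F Y U ↔ QuantileAtomCalibrated μ F Y := by
  refine forall₂_congr fun α hα => ?_
  rw [(condExp_congr_ae (indicator_PIT_le_ae_eq hprob hreg hα)).congr_left]
  exact condExp_comap_ae_eq_comp_iff (hq α hα) (h𝓖.image _)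
    (hF𝓖.mono fun _ h => mem_image_of_mem (lowerQuantile · α) h)
    (integrable_belowQuantile hY (hq α hα)) measurable_const (integrable_const α)

lemma CEPCalibrated.measure_PIT_le (hcep : CEPCalibrated μ F Y U)
    (hprob : ∀ ω, IsProbabilityMeasure (F ω)) (hreg : ∀ᵐ ω ∂μ, IsRegularCDF (F ω))
    (hY : Measurable Y) (hq : ∀ α ∈ Ioo (0:ℝ) 1, Measurable fun ω => lowerQuantile (F ω) α)
    {α : ℝ} (hα : α ∈ Ioo 0 1) : μ {ω | PIT F Y U ω ≤ α} = ENNReal.ofReal α := by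
  have hint : ∫ ω, belowQuantile F Y α ω ∂μ = α := by
    rw [← integral_congr_ae (indicator_PIT_le_ae_eq hprob hreg hα),
      ← integral_condExp (hq α hα).comap_le, integral_congr_ae (hcep α hα)]
    simp
  rw [belowQuantile, integral_indicator_const _ (measurableSet_le hY (hq α hα)), smul_eq_mul,
    mul_one, measureReal_def] at hint
  have hset : {ω | PIT F Y U ω ≤ α} =ᵐ[μ] {ω | Y ω ≤ lowerQuantile (F ω) α} :=
    eventuallyEq_set.2 (PIT_le_ae_iff hprob hreg hα)
  rw [measure_congr hset, ← ENNReal.ofReal_toReal (measure_ne_top μ _), hint]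

lemma CEPCalibrated.probCalibrated (hcep : CEPCalibrated μ F Y U) (hF : Measurable F)
    (hprob : ∀ ω, IsProbabilityMeasure (F ω)) (hreg : ∀ᵐ ω ∂μ, IsRegularCDF (F ω))
    (hY : Measurable Y) (hq : ∀ α ∈ Ioo (0:ℝ) 1, Measurable fun ω => lowerQuantile (F ω) α) :
    ProbCalibrated μ F Y U :=
  map_eq_unif01 (aemeasurable_PIT hF hprob hreg hY)
    fun _ hα => hcep.measure_PIT_le hprob hreg hY hq hα

lemma quantileCalibrated_iff_condExp (hprob : ∀ ω, IsProbabilityMeasure (F ω))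
    (hreg : ∀ᵐ ω ∂μ, IsRegularCDF (F ω)) (hY : Measurable Y)
    (hqp : ∀ α ∈ Ioo (0:ℝ) 1, Measurable (qPairOf F α))
    (hregK : ∀ α ∈ Ioo (0:ℝ) 1,
      ∀ᵐ ω ∂μ, IsRegularCDF (condDistrib Y (qPairOf F α) μ (qPairOf F α ω))) :
    QuantileCalibrated μ F Y ↔ ∀ α ∈ Ioo (0:ℝ) 1,
      μ[belowQuantile F Y α | MeasurableSpace.comap (qPairOf F α) inferInstance]
        =ᵐ[μ] fun _ => α := by
  refine forall₂_congr fun α hα => ?_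
  have hbridge : μ[belowQuantile F Y α | MeasurableSpace.comap (qPairOf F α) inferInstance]
      =ᵐ[μ] fun ω => cdfAt (condDistrib Y (qPairOf F α) μ (qPairOf F α ω))
        (lowerQuantile (F ω) α) :=
    condExp_indicator_le_comp_ae_eq (hqp α hα) hY measurable_fst
  rw [hbridge.congr_left]
  constructor
  · intro h
    filter_upwards [h, hregK α hα] with ω hω hK
    rw [← hω.1]
    exact hK.cdfAt_lowerQuantile hα
  · intro h
    filter_upwards [h, hreg, hregK α hα] with ω hω hF hK
    have hlow := (hK.lowerQuantile_eq_iff hα _).2 hω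
    exact ⟨hlow, by rw [hK.upperQuantile_eq hα, hF.upperQuantile_eq hα, hlow]⟩

lemma condExp_qPairOf_iff (hprob : ∀ ω, IsProbabilityMeasure (F ω))
    (hreg : ∀ᵐ ω ∂μ, IsRegularCDF (F ω)) (hY : Measurable Y) {α : ℝ} (hα : α ∈ Ioo 0 1)
    (hqp : Measurable (qPairOf F α)) (h𝓖 : 𝓖.Countable) (hF𝓖 : ∀ᵐ ω ∂μ, F ω ∈ 𝓖) :
    μ[belowQuantile F Y α | MeasurableSpace.comap (qPairOf F α) inferInstance]
        =ᵐ[μ] (fun _ => α) ↔ ∀ q : ℝ,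
      ∫ ω in (fun ω => lowerQuantile (F ω) α) ⁻¹' {q}, belowQuantile F Y α ω ∂μ =
        ∫ _ in (fun ω => lowerQuantile (F ω) α) ⁻¹' {q}, α ∂μ := by
  refine (condExp_comap_ae_eq_comp_iff hqp
    (h𝓖.image fun G => (lowerQuantile G α, upperQuantile G α))
    (hF𝓖.mono fun _ h => mem_image_of_mem _ h)
    (integrable_belowQuantile hY (measurable_fst.comp hqp)) measurable_const
    (integrable_const α)).trans ?_
  have hdiag : ∀ᵐ ω ∂μ, qPairOf F α ω = (lowerQuantile (F ω) α, lowerQuantile (F ω) α) :=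
    hreg.mono fun ω h => by rw [qPairOf, h.upperQuantile_eq hα]
  have hfiber : ∀ q, qPairOf F α ⁻¹' {(q, q)} =ᵐ[μ] (fun ω => lowerQuantile (F ω) α) ⁻¹' {q} :=
    fun q => eventuallyEq_set.2 (hdiag.mono fun ω h => by simp [h])
  have hnull : ∀ a b, a ≠ b → μ (qPairOf F α ⁻¹' {(a, b)}) = 0 := fun a b hab =>
    measure_eq_zero_iff_ae_notMem.2 (hdiag.mono fun ω h hmem => by
      obtain ⟨rfl, rfl⟩ := Prod.ext_iff.1 (h.symm.trans hmem)
      exact hab rfl)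
  refine ⟨fun h q => ?_, fun h ⟨a, b⟩ => ?_⟩
  · rw [← setIntegral_congr_set (hfiber q), ← setIntegral_congr_set (hfiber q)]
    exact h (q, q)
  · by_cases hab : a = b
    · subst hab
      rw [setIntegral_congr_set (hfiber a), setIntegral_congr_set (hfiber a)]
      exact h a
    · rw [setIntegral_measure_zero _ (hnull a b hab), setIntegral_measure_zero _ (hnull a b hab)]

lemma quantileCalibrated_iff (hprob : ∀ ω, IsProbabilityMeasure (F ω))
    (hreg : ∀ᵐ ω ∂μ, IsRegularCDF (F ω)) (hY : Measurable Y)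
    (hqp : ∀ α ∈ Ioo (0:ℝ) 1, Measurable (qPairOf F α))
    (hregK : ∀ α ∈ Ioo (0:ℝ) 1,
      ∀ᵐ ω ∂μ, IsRegularCDF (condDistrib Y (qPairOf F α) μ (qPairOf F α ω)))
    (h𝓖 : 𝓖.Countable) (hF𝓖 : ∀ᵐ ω ∂μ, F ω ∈ 𝓖) :
    QuantileCalibrated μ F Y ↔ QuantileAtomCalibrated μ F Y :=
  (quantileCalibrated_iff_condExp hprob hreg hY hqp hregK).trans <|
    forall₂_congr fun _ hα => condExp_qPairOf_iff hprob hreg hY hα (hqp _ hα) h𝓖 hF𝓖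

lemma threshCalibrated_iff (hprob : ∀ ω, IsProbabilityMeasure (F ω)) (hY : Measurable Y)
    (ht : ∀ t : ℝ, Measurable fun ω => cdfAt (F ω) t)
    (h𝓖 : 𝓖.Countable) (hF𝓖 : ∀ᵐ ω ∂μ, F ω ∈ 𝓖) :
    ThreshCalibrated μ F Y ↔ ∀ t v : ℝ,
      ∫ ω in (fun ω => cdfAt (F ω) t) ⁻¹' {v}, {ω | Y ω ≤ t}.indicator (fun _ => (1:ℝ)) ω ∂μ =
        ∫ ω in (fun ω => cdfAt (F ω) t) ⁻¹' {v}, cdfAt (F ω) t ∂μ :=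
  forall_congr' fun t => condExp_comap_ae_eq_comp_iff (ht t) (h𝓖.image (cdfAt · t))
    (hF𝓖.mono fun _ h => mem_image_of_mem _ h)
    ((integrable_const 1).indicator (measurableSet_le hY measurable_const)) measurable_id
    (.of_bound (ht t).aestronglyMeasurable 1 (.of_forall fun ω => by
      change |cdfAt (F ω) t| ≤ 1
      rw [abs_of_nonneg (cdfAt_nonneg _ _)]
      exact cdfAt_le_one _ _))

lemma ThreshCalibrated.quantileAtomCalibrated (h : ThreshCalibrated μ F Y)
    (hprob : ∀ ω, IsProbabilityMeasure (F ω)) (hreg : ∀ᵐ ω ∂μ, IsRegularCDF (F ω))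
    (hY : Measurable Y) (hq : ∀ α ∈ Ioo (0:ℝ) 1, Measurable fun ω => lowerQuantile (F ω) α)
    (ht : ∀ t : ℝ, Measurable fun ω => cdfAt (F ω) t) (h𝓖 : 𝓖.Countable)
    (hF𝓖 : ∀ᵐ ω ∂μ, F ω ∈ 𝓖) : QuantileAtomCalibrated μ F Y := fun α hα q =>
  (setIntegral_cdfAt_fiber_iff hprob hreg hα (hq α hα) (ht q)).1
    ((threshCalibrated_iff hprob hY ht h𝓖 hF𝓖).1 h q α)

lemma QuantileAtomCalibrated.threshCalibrated (h : QuantileAtomCalibrated μ F Y)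
    (hpc : ProbCalibrated μ F Y U) (hF : Measurable F) (hprob : ∀ ω, IsProbabilityMeasure (F ω))
    (hreg : ∀ᵐ ω ∂μ, IsRegularCDF (F ω)) (hY : Measurable Y)
    (hq : ∀ α ∈ Ioo (0:ℝ) 1, Measurable fun ω => lowerQuantile (F ω) α)
    (ht : ∀ t : ℝ, Measurable fun ω => cdfAt (F ω) t) (h𝓖 : 𝓖.Countable)
    (hF𝓖 : ∀ᵐ ω ∂μ, F ω ∈ 𝓖) : ThreshCalibrated μ F Y := by
  refine (threshCalibrated_iff hprob hY ht h𝓖 hF𝓖).2 fun t v => ?_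
  by_cases hv : v ∈ Ioo 0 1
  · exact (setIntegral_cdfAt_fiber_iff hprob hreg hv (hq v hv) (ht t)).2 (h v hv t)
  · refine setIntegral_congr_ae (ht t (measurableSet_singleton v)) ?_
    filter_upwards [hpc.indicator_le_ae_eq_cdfAt hF hprob hreg hY t]
      with ω hω (hωv : cdfAt (F ω) t = v)
    exact hω (hωv ▸ hv)

lemma ThreshCalibrated.margCalibrated (h : ThreshCalibrated μ F Y) (hY : Measurable Y)
    (ht : ∀ t : ℝ, Measurable fun ω => cdfAt (F ω) t) : MargCalibrated μ F Y := fun y => by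
  rw [← integral_congr_ae (h y), integral_condExp (ht y).comap_le,
    integral_indicator_const _ (measurableSet_le hY measurable_const), smul_eq_mul, mul_one,
    measureReal_def]

end PredictionSpace

theorem cep_quantile_threshold_equivalent_general
    {Ω : Type*} [MeasurableSpace Ω] (μ : Measure Ω) [IsProbabilityMeasure μ]
    (F : Ω → Measure ℝ) (Y U : Ω → ℝ) (hps : IsPredictionSpace μ F Y U)
    (𝓕 : Set (Measure ℝ)) (hF𝓕 : ∀ᵐ ω ∂μ, F ω ∈ 𝓕)
    (hcsi : CSI 𝓕)
    (𝓖 : Set (Measure ℝ)) (h𝓖count : 𝓖.Countable)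
    (hF𝓖 : ∀ᵐ ω ∂μ, F ω ∈ 𝓖)
    -- Assumption (T) for all quantile functionals:
    (hqmeas : ∀ α ∈ Set.Ioo (0:ℝ) 1, Measurable (qPairOf F α))
    (hqcond : ∀ α ∈ Set.Ioo (0:ℝ) 1, ∀ᵐ ω ∂μ,
      condDistrib Y (qPairOf F α) μ (qPairOf F α ω) ∈ 𝓕)
    -- Assumption (T) for all threshold non-exceedance functionals:
    (htmeas : ∀ t : ℝ, Measurable (fun ω => cdfAt (F ω) t)) :
    ((CEPCalibrated μ F Y U ↔ QuantileCalibrated μ F Y) ∧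
     (QuantileCalibrated μ F Y ↔ ThreshCalibrated μ F Y)) ∧
    (CEPCalibrated μ F Y U → ProbCalibrated μ F Y U ∧ MargCalibrated μ F Y) := by
  have hprob := hps.probF
  have hY := hps.measY
  have hreg : ∀ᵐ ω ∂μ, IsRegularCDF (F ω) := hF𝓕.mono fun _ h => hcsi.isRegularCDF h
  have hregK : ∀ α ∈ Ioo (0:ℝ) 1,
      ∀ᵐ ω ∂μ, IsRegularCDF (condDistrib Y (qPairOf F α) μ (qPairOf F α ω)) :=
    fun α hα => (hqcond α hα).mono fun _ h => hcsi.isRegularCDF h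
  have hq : ∀ α ∈ Ioo (0:ℝ) 1, Measurable fun ω => lowerQuantile (F ω) α :=
    fun α hα => measurable_fst.comp (hqmeas α hα)
  have hCEP := cepCalibrated_iff (U := U) hprob hreg hY hq h𝓖count hF𝓖
  have hQ := quantileCalibrated_iff hprob hreg hY hqmeas hregK h𝓖count hF𝓖
  have hProb : CEPCalibrated μ F Y U → ProbCalibrated μ F Y U :=
    fun h => h.probCalibrated hps.measF hprob hreg hY hq
  have hT : ThreshCalibrated μ F Y ↔ QuantileAtomCalibrated μ F Y :=
    ⟨fun h => h.quantileAtomCalibrated hprob hreg hY hq htmeas h𝓖count hF𝓖,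
      fun h => h.threshCalibrated (hProb (hCEP.2 h)) hps.measF hprob hreg hY hq htmeas h𝓖count
        hF𝓖⟩
  exact ⟨⟨hCEP.trans hQ.symm, hQ.trans hT.symm⟩,
    fun h => ⟨hProb h, (hT.2 (hCEP.1 h)).margCalibrated hY htmeas⟩⟩

/-- **Theorem (Statement 5).** If all CDFs in the class `𝓕` (containing `F` almost surely)
are continuous and strictly increasing on a shared support interval, there is a countable
`𝓖 ⊆ 𝓕` with `Q(F ∈ 𝓖) = 1`, and Assumption (T) holds for all quantile and threshold
functionals, then CEP, quantile, and threshold calibration are all equivalent, and each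
implies both probabilistic and marginal calibration. -/
theorem cep_quantile_threshold_equivalent
    {Ω : Type*} [MeasurableSpace Ω] (μ : Measure Ω) [IsProbabilityMeasure μ]
    (F : Ω → Measure ℝ) (Y U : Ω → ℝ) (hps : IsPredictionSpace μ F Y U)
    (𝓕 : Set (Measure ℝ)) (hF𝓕 : ∀ᵐ ω ∂μ, F ω ∈ 𝓕)
    (hcsi : CSI 𝓕)
    (𝓖 : Set (Measure ℝ)) (h𝓖count : 𝓖.Countable) (h𝓖sub : 𝓖 ⊆ 𝓕)
    (hF𝓖 : ∀ᵐ ω ∂μ, F ω ∈ 𝓖)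
    -- Assumption (T) for all quantile functionals:
    (hqmeas : ∀ α ∈ Set.Ioo (0:ℝ) 1, Measurable (qPairOf F α))
    (hqcond : ∀ α ∈ Set.Ioo (0:ℝ) 1, ∀ᵐ ω ∂μ,
      condDistrib Y (qPairOf F α) μ (qPairOf F α ω) ∈ 𝓕)
    -- Assumption (T) for all threshold non-exceedance functionals:
    (htmeas : ∀ t : ℝ, Measurable (fun ω => cdfAt (F ω) t))
    (htcond : ∀ t : ℝ, ∀ᵐ ω ∂μ,
      condDistrib Y (fun ω' => cdfAt (F ω') t) μ (cdfAt (F ω) t) ∈ 𝓕) :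
    ((CEPCalibrated μ F Y U ↔ QuantileCalibrated μ F Y) ∧
     (QuantileCalibrated μ F Y ↔ ThreshCalibrated μ F Y)) ∧
    (CEPCalibrated μ F Y U → ProbCalibrated μ F Y U ∧ MargCalibrated μ F Y) :=
  cep_quantile_threshold_equivalent_general μ F Y U hps 𝓕 hF𝓕 hcsi 𝓖 h𝓖count hF𝓖 hqmeas hqcond
    htmeas
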